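/- Let S be a reachable system under the uncontrolled reversible semantics. If S ⟲* S' under the controlled backward semantics, then rolldel(S) ⇌* rolldel(S') under the uncontrolled reversible semantics, where rolldel removes all ongoing rollback-request annotations from a system. -/

import Mathlib

/-
  Formalization of "An Asynchronous Scheme for Rollback Recovery in
  Message-Passing Concurrent Programming Languages" (G. Vidal, SAC'24).

  We model:
  * an abstract local language `Lang` (local transition relations for
    sequential steps, send, receive, spawn, check, commit, rollback);
  * the standard semantics `SStep` on systems of process configurations
    ⟨p,s⟩ and floating messages (p,p',v) (systems are multisets, which
    realizes the commutative/associative parallel composition, the Par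
    rule being built in by including the rest of the system in each rule);
  * the rollback recovery semantics `RStepL` (labelled by the kind of rule
    applied) on systems of extended process configurations ⟨Δ,p,s⟩ (possibly
    blocked/annotated), extended tagged messages (C,p,p',{ℓ,v}) and system
    notifications ⟬p,p',v⟭;
  * the uncontrolled reversible semantics (`FwdStep`/`BwdStep`/`RevStep`)
    and the controlled backward semantics `CBStep` on systems of
    configurations ⟪h,p,s⟫_φ (a plain configuration ⟨h,p,s⟩ is one with
    φ = ∅, which realizes the structural equivalence SC);
  * the projection `sta`, the normalizations ⌊·⌋ / ⌈·⌉ and the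
    equivalence ≈ (`equivSys`), and `rolldel`.

  Local states are abstract (`State`), message values abstract (`Value`);
  pids, message tags and checkpoint identifiers are natural numbers.
  A ⊥ state is represented by `none : Option State`.
-/

namespace RB

/-- Rollback requests of the controlled backward semantics:
a checkpoint identifier τ, a message tag ℓ, or sp. -/
inductive Req : Type where
  | chk (τ : ℕ)
  | tag (ℓ : ℕ)
  | sp
deriving DecidableEq

/-- Labels identifying which rule of the rollback recovery semantics is applied.
`check p τ`, `commit p τ` and `rollback p τ` record the pid of the process
performing the call and the checkpoint identifier; `commitN` covers the
notification-driven commit rules (Commit2, Delay2, Commit3) and `rollN`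
the rollback-propagation rules (Roll1-Roll3, Undo-*, Resume1-4). -/
inductive RLabel : Type where
  | seq | send | recv | spawn
  | check (p τ : ℕ)
  | commit (p τ : ℕ)
  | rollback (p τ : ℕ)
  | commitN
  | rollN
deriving DecidableEq

/-- The abstract local (expression-level) semantics of the language. -/
structure Lang (State Value : Type) where
  /-- s ─seq→ s' -/
  seqStep : State → State → Prop
  /-- s ─send(p',v)→ s' -/
  sendStep : State → ℕ → Value → State → Prop
  /-- s ─rec(κ,cs)→ s'' where matchrec(cs,v) = csᵢ and s'' = s'[κ←csᵢ] -/
  recvStep : State → Value → State → Prop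
  /-- s ─spawn(κ,s₀)→ s'' where s'' = s'[κ←p'] for the fresh pid p' -/
  spawnStep : State → ℕ → State → State → Prop
  /-- s ─check(κ)→ s'' where s'' = s'[κ←τ] for the fresh checkpoint id τ -/
  checkStep : State → ℕ → State → Prop
  /-- s ─commit(τ)→ s' -/
  commitStep : State → ℕ → State → Prop
  /-- s ─rollback(τ)→ s' -/
  rollbackStep : State → ℕ → State → Prop

/-! ## Standard semantics -/

/-- Components of a system of the standard semantics. -/
inductive SComp (State Value : Type) : Type where
  | proc (p : ℕ) (s : Option State)
  | msg (p p' : ℕ) (v : Value)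

abbrev SSys (State Value : Type) := Multiset (SComp State Value)

/-- pid `x` occurs in the standard system `S` (function `id` of the paper). -/
def pidUsedS (State Value : Type) (x : ℕ) (S : SSys State Value) : Prop :=
  ∃ c ∈ S, match c with
    | SComp.proc p _ => x = p
    | SComp.msg p q _ => x = p ∨ x = q

/-- The standard semantics (Figure 3).  The Par rule is built in:
every rule carries the rest of the system `R`. -/
inductive SStep (State Value : Type) (L : Lang State Value) :
    SSys State Value → SSys State Value → Prop where
  | seq : ∀ (p : ℕ) (s s' : State) (R : SSys State Value),
      L.seqStep s s' →
      SStep State Value L (SComp.proc p (some s) ::ₘ R) (SComp.proc p (some s') ::ₘ R)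
  | send : ∀ (p p' : ℕ) (v : Value) (s s' : State) (R : SSys State Value),
      L.sendStep s p' v s' →
      SStep State Value L (SComp.proc p (some s) ::ₘ R)
        (SComp.msg p p' v ::ₘ SComp.proc p (some s') ::ₘ R)
  | recv : ∀ (p q : ℕ) (v : Value) (s s' : State) (R : SSys State Value),
      L.recvStep s v s' →
      SStep State Value L (SComp.msg q p v ::ₘ SComp.proc p (some s) ::ₘ R)
        (SComp.proc p (some s') ::ₘ R)
  | spawn : ∀ (p p' : ℕ) (s s0 s' : State) (R : SSys State Value),
      L.spawnStep s p' s0 s' →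
      ¬ pidUsedS State Value p' (SComp.proc p (some s) ::ₘ R) →
      SStep State Value L (SComp.proc p (some s) ::ₘ R)
        (SComp.proc p (some s') ::ₘ SComp.proc p' (some s0) ::ₘ R)

/-! ## Rollback recovery semantics -/

/-- History items of the rollback recovery semantics:
`check τ s` (an active checkpoint with saved state `s`, `none` = ⊥),
`dcheck τ s` (a checkpoint whose commit has been delayed, written check̄(τ,s)),
`send q ℓ`, `rec C q ℓ v` (a message tagged ℓ with value v received from q,
carrying the set C of checkpoint ids of the sender) and `spawn q`. -/
inductive HItem (State Value : Type) : Type where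
  | check (τ : ℕ) (s : Option State)
  | dcheck (τ : ℕ) (s : Option State)
  | send (q ℓ : ℕ)
  | recM (C : Finset ℕ) (q ℓ : ℕ) (v : Value)
  | spawn (q : ℕ)

abbrev Hist (State Value : Type) := List (HItem State Value)

/-- Annotations of a process configuration: `noAnn` (normal forward mode),
`roll τ pτ pr Lc P` (blocked, rolling back to checkpoint τ, started by pτ,
requested by pr, with pending sent-message tags Lc and pending process
dependencies P) and `wait τ` (the form ⟨Δ,p,s⟩^τ used by Resume3/Resume4). -/
inductive RAnn : Type where
  | noAnn
  | roll (τ pτ pr : ℕ) (Lc P : Finset ℕ)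
  | wait (τ : ℕ)

/-- Values of system notifications. -/
inductive NVal : Type where
  | roll (pτ τ : ℕ)
  | doneAsync (τ : ℕ)
  | doneSync (τ : ℕ)
  | resume (τ : ℕ)
  | commit (τ : ℕ)

/-- Components of a system of the rollback recovery semantics:
(possibly annotated) extended process configurations ⟨Δ,p,s⟩,
extended messages (C,p,p',{ℓ,v}) and system notifications ⟬p,p',v⟭. -/
inductive RComp (State Value : Type) : Type where
  | proc (Δ : Hist State Value) (p : ℕ) (s : Option State) (a : RAnn)
  | msg (C : Finset ℕ) (p p' ℓ : ℕ) (v : Value)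
  | notif (p p' : ℕ) (n : NVal)

abbrev RSys (State Value : Type) := Multiset (RComp State Value)

/-- The set of active checkpoints of a history (function chks). -/
def chks (State Value : Type) : Hist State Value → Finset ℕ
  | [] => ∅
  | HItem.check τ _ :: Δ' => insert τ (chks State Value Δ')
  | _ :: Δ' => chks State Value Δ'

/-- Function add(a,Δ): record `a` only if there is some active checkpoint. -/
def addH (State Value : Type) (a : HItem State Value) (Δ : Hist State Value) :
    Hist State Value :=
  if chks State Value Δ = ∅ then Δ else a :: Δ

/-- τ ∈ Δ : the history contains a checkpoint (active or delayed) named τ. -/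
def hasChk (State Value : Type) (τ : ℕ) (Δ : Hist State Value) : Prop :=
  ∃ it ∈ Δ, match it with
    | HItem.check τ' _ => τ' = τ
    | HItem.dcheck τ' _ => τ' = τ
    | _ => False

/-- τ' ≤_Δ τ : the ongoing rollback (to τ') is at least as old as the
requested one (to τ): since Δ has already been truncated past check τ',
this amounts to the requested checkpoint τ having been unwound already. -/
def olderEq (State Value : Type) (Δ : Hist State Value) (_τ' τ : ℕ) : Prop :=
  ¬ hasChk State Value τ Δ

/-- Result of function chk(τ,Δ): the truncated history, the saved state,
the tags L of the messages sent, the pids P of the spawned processes and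
message recipients, and the received messages Ms (all since the checkpoint). -/
structure ChkRes (State Value : Type) : Type where
  hist : Hist State Value
  st : Option State
  L : Finset ℕ
  P : Finset ℕ
  Ms : RSys State Value

/-- Function chk(τ,Δ) (Figure 8); `p` is the pid of the owner of the
history (needed to put received messages back on the network). -/
def chkF (State Value : Type) (p τ : ℕ) : Hist State Value → Option (ChkRes State Value)
  | [] => none
  | HItem.check τ' s :: Δ' =>
      if τ' = τ then some ⟨Δ', s, ∅, ∅, 0⟩ else chkF State Value p τ Δ'
  | HItem.dcheck τ' s :: Δ' =>
      if τ' = τ then some ⟨Δ', s, ∅, ∅, 0⟩ else chkF State Value p τ Δ'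
  | HItem.spawn q :: Δ' =>
      (chkF State Value p τ Δ').map fun r => { r with P := insert q r.P }
  | HItem.send q ℓ :: Δ' =>
      (chkF State Value p τ Δ').map fun r =>
        { r with L := insert ℓ r.L, P := insert q r.P }
  | HItem.recM C q ℓ v :: Δ' =>
      (chkF State Value p τ Δ').map fun r =>
        { r with Ms := RComp.msg C q p ℓ v ::ₘ r.Ms }

/-- Function last(τ,Δ): τ is the most recent active checkpoint. -/
def lastA (State Value : Type) (τ : ℕ) : Hist State Value → Prop
  | [] => False
  | HItem.check τ' _ :: _ => τ' = τ
  | _ :: Δ' => lastA State Value τ Δ'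

/-- Function del(τ,Δ): delete every element up to (and including) checkpoint τ. -/
def delH (State Value : Type) (τ : ℕ) : Hist State Value → Hist State Value
  | [] => []
  | HItem.check τ' s :: Δ' =>
      if τ' = τ then Δ' else delH State Value τ Δ'
  | HItem.dcheck τ' s :: Δ' =>
      if τ' = τ then Δ' else delH State Value τ Δ'
  | _ :: Δ' => delH State Value τ Δ'

/-- Function delay(τ,Δ): mark checkpoint τ as delayed (check̄). -/
def delayH (State Value : Type) (τ : ℕ) : Hist State Value → Hist State Value
  | [] => []
  | HItem.check τ' s :: Δ' =>
      if τ' = τ then HItem.dcheck τ' s :: Δ' else HItem.check τ' s :: delayH State Value τ Δ'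
  | a :: Δ' => a :: delayH State Value τ Δ'

/-- The topmost checkpoint of a history together with a flag telling
whether it is delayed (used for rule Commit3: `τ ∈ delayed(Δ) ∧ last(τ)`
amounts to `topChk Δ = some (true, τ)`). -/
def topChk (State Value : Type) : Hist State Value → Option (Bool × ℕ)
  | [] => none
  | HItem.check τ _ :: _ => some (false, τ)
  | HItem.dcheck τ _ :: _ => some (true, τ)
  | _ :: Δ' => topChk State Value Δ'

/-- pid `x` occurs in the rollback-recovery system `S`. -/
def pidUsedR (State Value : Type) (x : ℕ) (S : RSys State Value) : Prop :=
  ∃ c ∈ S, match c with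
    | RComp.proc Δ p _ _ =>
        x = p ∨ ∃ it ∈ Δ, (match it with
          | HItem.send q _ => x = q
          | HItem.recM _ q _ _ => x = q
          | HItem.spawn q => x = q
          | _ => False)
    | RComp.msg _ p q _ _ => x = p ∨ x = q
    | RComp.notif p q _ => x = p ∨ x = q

/-- message tag `ℓ` occurs in the rollback-recovery system `S`. -/
def tagUsedR (State Value : Type) (ℓ : ℕ) (S : RSys State Value) : Prop :=
  ∃ c ∈ S, match c with
    | RComp.proc Δ _ _ a =>
        (∃ it ∈ Δ, (match it with
          | HItem.send _ ℓ' => ℓ = ℓ'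
          | HItem.recM _ _ ℓ' _ => ℓ = ℓ'
          | _ => False)) ∨
        (match a with
          | RAnn.roll _ _ _ Lc _ => ℓ ∈ Lc
          | _ => False)
    | RComp.msg _ _ _ ℓ' _ => ℓ = ℓ'
    | RComp.notif _ _ _ => False

/-- checkpoint identifier `τ` occurs in the rollback-recovery system `S`. -/
def chkUsedR (State Value : Type) (τ : ℕ) (S : RSys State Value) : Prop :=
  ∃ c ∈ S, match c with
    | RComp.proc Δ _ _ a =>
        (∃ it ∈ Δ, (match it with
          | HItem.check τ' _ => τ = τ'
          | HItem.dcheck τ' _ => τ = τ'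
          | HItem.recM C _ _ _ => τ ∈ C
          | _ => False)) ∨
        (match a with
          | RAnn.roll τ' _ _ _ _ => τ = τ'
          | RAnn.wait τ' => τ = τ'
          | RAnn.noAnn => False)
    | RComp.msg C _ _ _ _ => τ ∈ C
    | RComp.notif _ _ n =>
        (match n with
          | NVal.roll _ τ' => τ = τ'
          | NVal.doneAsync τ' => τ = τ'
          | NVal.doneSync τ' => τ = τ'
          | NVal.resume τ' => τ = τ'
          | NVal.commit τ' => τ = τ')

/-- The rollback recovery semantics (Figures 5-7, 9 and 10), labelled by
the kind of rule applied.  The Par rule is built in (rest `R`).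
For rollback we take s' ⊕ s_τ = s_τ, as in the paper's soundness section. -/
inductive RStepL (State Value : Type) (L : Lang State Value) :
    RLabel → RSys State Value → RSys State Value → Prop where
  /- forward rules (Figure 6) -/
  | seq : ∀ (Δ : Hist State Value) (p : ℕ) (s s' : State) (R : RSys State Value),
      L.seqStep s s' →
      RStepL State Value L RLabel.seq
        (RComp.proc Δ p (some s) RAnn.noAnn ::ₘ R)
        (RComp.proc Δ p (some s') RAnn.noAnn ::ₘ R)
  | send : ∀ (Δ : Hist State Value) (p p' ℓ : ℕ) (v : Value) (s s' : State)
      (R : RSys State Value),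
      L.sendStep s p' v s' →
      ¬ tagUsedR State Value ℓ (RComp.proc Δ p (some s) RAnn.noAnn ::ₘ R) →
      RStepL State Value L RLabel.send
        (RComp.proc Δ p (some s) RAnn.noAnn ::ₘ R)
        (RComp.msg (chks State Value Δ) p p' ℓ v ::ₘ
          RComp.proc (addH State Value (HItem.send p' ℓ) Δ) p (some s') RAnn.noAnn ::ₘ R)
  | recv : ∀ (Δ : Hist State Value) (C' : Finset ℕ) (p q ℓ : ℕ) (v : Value)
      (s s' : State) (R : RSys State Value),
      L.recvStep s v s' →
      RStepL State Value L RLabel.recv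
        (RComp.msg C' q p ℓ v ::ₘ RComp.proc Δ p (some s) RAnn.noAnn ::ₘ R)
        (RComp.proc
          (addH State Value (HItem.recM C' q ℓ v)
            (((C' \ chks State Value Δ).toList.map fun τ => HItem.check τ (some s)) ++ Δ))
          p (some s') RAnn.noAnn ::ₘ R)
  | spawn : ∀ (Δ : Hist State Value) (p p' : ℕ) (s s0 s' : State) (R : RSys State Value),
      L.spawnStep s p' s0 s' →
      ¬ pidUsedR State Value p' (RComp.proc Δ p (some s) RAnn.noAnn ::ₘ R) →
      RStepL State Value L RLabel.spawn
        (RComp.proc Δ p (some s) RAnn.noAnn ::ₘ R)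
        (RComp.proc (addH State Value (HItem.spawn p') Δ) p (some s') RAnn.noAnn ::ₘ
          RComp.proc ((chks State Value Δ).toList.map fun τ => HItem.check τ (none : Option State))
            p' (some s0) RAnn.noAnn ::ₘ R)
  /- rule Check (Figure 5) -/
  | check : ∀ (Δ : Hist State Value) (p τ : ℕ) (s s' : State) (R : RSys State Value),
      L.checkStep s τ s' →
      ¬ chkUsedR State Value τ (RComp.proc Δ p (some s) RAnn.noAnn ::ₘ R) →
      RStepL State Value L (RLabel.check p τ)
        (RComp.proc Δ p (some s) RAnn.noAnn ::ₘ R)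
        (RComp.proc (HItem.check τ (some s) :: Δ) p (some s') RAnn.noAnn ::ₘ R)
  /- commit rules (Figure 10) -/
  | commit : ∀ (Δ Δ'' : Hist State Value) (p τ : ℕ) (s s' : State) (sτ : Option State)
      (Lc P : Finset ℕ) (Ms R : RSys State Value),
      L.commitStep s τ s' →
      lastA State Value τ Δ →
      chkF State Value p τ Δ = some ⟨Δ'', sτ, Lc, P, Ms⟩ →
      RStepL State Value L (RLabel.commit p τ)
        (RComp.proc Δ p (some s) RAnn.noAnn ::ₘ R)
        (RComp.proc (delH State Value τ Δ) p (some s') RAnn.noAnn ::ₘ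
          (P.val.map fun q => RComp.notif p q (NVal.commit τ)) + R)
  | delay : ∀ (Δ : Hist State Value) (p τ : ℕ) (s s' : State) (R : RSys State Value),
      L.commitStep s τ s' →
      ¬ lastA State Value τ Δ →
      RStepL State Value L (RLabel.commit p τ)
        (RComp.proc Δ p (some s) RAnn.noAnn ::ₘ R)
        (RComp.proc (delayH State Value τ Δ) p (some s') RAnn.noAnn ::ₘ R)
  | commit2 : ∀ (Δ Δ'' : Hist State Value) (p q τ : ℕ) (s sτ : Option State)
      (Lc P : Finset ℕ) (Ms R : RSys State Value),
      lastA State Value τ Δ →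
      chkF State Value p τ Δ = some ⟨Δ'', sτ, Lc, P, Ms⟩ →
      RStepL State Value L RLabel.commitN
        (RComp.notif q p (NVal.commit τ) ::ₘ RComp.proc Δ p s RAnn.noAnn ::ₘ R)
        (RComp.proc (delH State Value τ Δ) p s RAnn.noAnn ::ₘ
          (P.val.map fun r => RComp.notif p r (NVal.commit τ)) + R)
  | delay2 : ∀ (Δ : Hist State Value) (p q τ : ℕ) (s : Option State) (R : RSys State Value),
      ¬ lastA State Value τ Δ →
      RStepL State Value L RLabel.commitN
        (RComp.notif q p (NVal.commit τ) ::ₘ RComp.proc Δ p s RAnn.noAnn ::ₘ R)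
        (RComp.proc (delayH State Value τ Δ) p s RAnn.noAnn ::ₘ R)
  | commit3 : ∀ (Δ Δ'' : Hist State Value) (p τ : ℕ) (s sτ : Option State)
      (Lc P : Finset ℕ) (Ms R : RSys State Value),
      topChk State Value Δ = some (true, τ) →
      chkF State Value p τ Δ = some ⟨Δ'', sτ, Lc, P, Ms⟩ →
      RStepL State Value L RLabel.commitN
        (RComp.proc Δ p s RAnn.noAnn ::ₘ R)
        (RComp.proc (delH State Value τ Δ) p s RAnn.noAnn ::ₘ
          (P.val.map fun r => RComp.notif p r (NVal.commit τ)) + R)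
  /- rollback rules (Figure 9) -/
  | rollback : ∀ (Δ Δ' : Hist State Value) (p τ : ℕ) (s s' : State) (sτ : Option State)
      (Lc P : Finset ℕ) (Ms R : RSys State Value),
      L.rollbackStep s τ s' →
      chkF State Value p τ Δ = some ⟨Δ', sτ, Lc, P, Ms⟩ →
      RStepL State Value L (RLabel.rollback p τ)
        (RComp.proc Δ p (some s) RAnn.noAnn ::ₘ R)
        (RComp.proc Δ' p sτ (RAnn.roll τ p p Lc P) ::ₘ
          (P.val.map fun q => RComp.notif p q (NVal.roll p τ)) + Ms + R)
  | roll1 : ∀ (Δ Δ' : Hist State Value) (p q pτ τ : ℕ) (s sτ : Option State)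
      (Lc P : Finset ℕ) (Ms R : RSys State Value),
      chkF State Value p τ Δ = some ⟨Δ', sτ, Lc, P, Ms⟩ →
      RStepL State Value L RLabel.rollN
        (RComp.notif q p (NVal.roll pτ τ) ::ₘ RComp.proc Δ p s RAnn.noAnn ::ₘ R)
        (RComp.proc Δ' p sτ (RAnn.roll τ pτ q Lc P) ::ₘ
          (P.val.map fun r => RComp.notif p r (NVal.roll pτ τ)) + Ms + R)
  | roll2 : ∀ (Δ : Hist State Value) (p q pτ τ : ℕ) (s : Option State) (R : RSys State Value),
      ¬ hasChk State Value τ Δ →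
      RStepL State Value L RLabel.rollN
        (RComp.notif q p (NVal.roll pτ τ) ::ₘ RComp.proc Δ p s RAnn.noAnn ::ₘ R)
        (RComp.proc Δ p s (RAnn.roll τ pτ q ∅ ∅) ::ₘ R)
  | roll3 : ∀ (Δ : Hist State Value) (p q pτ τ τ' p1 p2 : ℕ) (s : Option State)
      (Lc P : Finset ℕ) (R : RSys State Value),
      olderEq State Value Δ τ' τ →
      RStepL State Value L RLabel.rollN
        (RComp.notif q p (NVal.roll pτ τ) ::ₘ
          RComp.proc Δ p s (RAnn.roll τ' p1 p2 Lc P) ::ₘ R)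
        (RComp.proc Δ p s (RAnn.roll τ' p1 p2 Lc P) ::ₘ
          RComp.notif p q (NVal.doneAsync τ) ::ₘ R)
  | undoSend : ∀ (Δ : Hist State Value) (C : Finset ℕ) (p q q' ℓ τ pτ pr : ℕ)
      (v : Value) (s : Option State) (Lc P : Finset ℕ) (R : RSys State Value),
      ℓ ∈ Lc →
      RStepL State Value L RLabel.rollN
        (RComp.msg C q q' ℓ v ::ₘ RComp.proc Δ p s (RAnn.roll τ pτ pr Lc P) ::ₘ R)
        (RComp.proc Δ p s (RAnn.roll τ pτ pr (Lc.erase ℓ) P) ::ₘ R)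
  | undoDep1 : ∀ (Δ : Hist State Value) (p q τ pτ pr : ℕ) (s : Option State)
      (P : Finset ℕ) (R : RSys State Value),
      RStepL State Value L RLabel.rollN
        (RComp.notif q p (NVal.doneAsync τ) ::ₘ
          RComp.proc Δ p s (RAnn.roll τ pτ pr ∅ P) ::ₘ R)
        (RComp.proc Δ p s (RAnn.roll τ pτ pr ∅ (P.erase q)) ::ₘ R)
  | undoDep2 : ∀ (Δ : Hist State Value) (p q τ pτ pr : ℕ) (s : Option State)
      (P : Finset ℕ) (R : RSys State Value),
      RStepL State Value L RLabel.rollN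
        (RComp.notif q p (NVal.doneSync τ) ::ₘ
          RComp.proc Δ p s (RAnn.roll τ pτ pr ∅ P) ::ₘ R)
        (RComp.proc Δ p s (RAnn.roll τ pτ pr ∅ (P.erase q)) ::ₘ
          RComp.notif p q (NVal.resume τ) ::ₘ R)
  | resume1 : ∀ (Δ : Hist State Value) (p τ pr : ℕ) (s : Option State) (R : RSys State Value),
      RStepL State Value L RLabel.rollN
        (RComp.proc Δ p s (RAnn.roll τ p pr ∅ ∅) ::ₘ R)
        (RComp.proc Δ p s RAnn.noAnn ::ₘ R)
  | resume2 : ∀ (Δ : Hist State Value) (p τ pτ pr : ℕ) (R : RSys State Value),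
      p ≠ pτ →
      RStepL State Value L RLabel.rollN
        (RComp.proc Δ p (none : Option State) (RAnn.roll τ pτ pr ∅ ∅) ::ₘ R)
        (RComp.notif p pr (NVal.doneAsync τ) ::ₘ R)
  | resume3 : ∀ (Δ : Hist State Value) (p τ pτ pr : ℕ) (s : State) (R : RSys State Value),
      p ≠ pτ →
      RStepL State Value L RLabel.rollN
        (RComp.proc Δ p (some s) (RAnn.roll τ pτ pr ∅ ∅) ::ₘ R)
        (RComp.proc Δ p (some s) (RAnn.wait τ) ::ₘ
          RComp.notif p pr (NVal.doneSync τ) ::ₘ R)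
  | resume4 : ∀ (Δ : Hist State Value) (p q τ : ℕ) (s : Option State) (R : RSys State Value),
      RStepL State Value L RLabel.rollN
        (RComp.notif q p (NVal.resume τ) ::ₘ RComp.proc Δ p s (RAnn.wait τ) ::ₘ R)
        (RComp.proc Δ p s RAnn.noAnn ::ₘ R)

/-- One step of the rollback recovery semantics (any rule). -/
def RStep (State Value : Type) (L : Lang State Value)
    (S S' : RSys State Value) : Prop :=
  ∃ l, RStepL State Value L l S S'

/-- A system is reachable (under the rollback recovery semantics) if it is
derivable from an initial system ⟨[],p,s⟩ consisting of a single process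
with an empty history. -/
def ReachableR (State Value : Type) (L : Lang State Value) (S : RSys State Value) : Prop :=
  ∃ p s, Relation.ReflTransGen (RStep State Value L)
    ({RComp.proc ([] : Hist State Value) p (some s) RAnn.noAnn} : RSys State Value) S

/-- The projection sta: erase histories/annotations from processes, erase
checkpoint sets and tags from messages, and erase system notifications. -/
def staComp (State Value : Type) : RComp State Value → Option (SComp State Value)
  | RComp.proc _ p s _ => some (SComp.proc p s)
  | RComp.msg _ p q _ v => some (SComp.msg p q v)
  | RComp.notif _ _ _ => none

def staSys (State Value : Type) (S : RSys State Value) : SSys State Value :=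
  Multiset.filterMap (staComp State Value) S

/-- A derivation under the rollback recovery semantics: a sequence of
`len` labelled steps. -/
structure Deriv (State Value : Type) (L : Lang State Value) : Type where
  len : ℕ
  sys : ℕ → RSys State Value
  lab : ℕ → RLabel
  step : ∀ i, i < len → RStepL State Value L (lab i) (sys i) (sys (i + 1))

/-- `l` is a commit(τ) or rollback(τ) action performed by process p. -/
def isCR (l : RLabel) (p τ : ℕ) : Prop :=
  l = RLabel.commit p τ ∨ l = RLabel.rollback p τ

/-- Well-defined derivations: they start from a reachable system; commit(τ)
and rollback(τ) are only called by the process that created checkpoint τ,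
and every such call is preceded by the corresponding call to check (either
within the derivation or before it); and for every checkpoint τ there is at
most one action, either commit(τ) or rollback(τ), but not both. -/
def WellDefined (State Value : Type) (L : Lang State Value)
    (d : Deriv State Value L) : Prop :=
  ReachableR State Value L (d.sys 0) ∧
  (∀ i, i < d.len → ∀ p τ, isCR (d.lab i) p τ →
      (∃ j, j < i ∧ d.lab j = RLabel.check p τ) ∨
      (∃ Δ s a, RComp.proc Δ p s a ∈ d.sys 0 ∧ hasChk State Value τ Δ)) ∧
  (∀ i j, i < d.len → j < d.len → i ≠ j →
      ∀ p p' τ, isCR (d.lab i) p τ → isCR (d.lab j) p' τ → False)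

/-- The forward rules of Figure 6 (Seq, Send, Receive, Spawn; Par built in). -/
def isCoreFwdLab (l : RLabel) : Prop :=
  l = RLabel.seq ∨ l = RLabel.send ∨ l = RLabel.recv ∨ l = RLabel.spawn

/-- A step using only the forward rules of Figure 6. -/
def RFwdStep (State Value : Type) (L : Lang State Value)
    (S S' : RSys State Value) : Prop :=
  ∃ l, isCoreFwdLab l ∧ RStepL State Value L l S S'

/-- Forward labels (Seq, Send, Receive, Spawn, Check and the commit rules). -/
def isFwdLab : RLabel → Prop
  | RLabel.seq => True
  | RLabel.send => True
  | RLabel.recv => True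
  | RLabel.spawn => True
  | RLabel.check _ _ => True
  | RLabel.commit _ _ => True
  | RLabel.commitN => True
  | _ => False

/-- Commit labels (rules Commit, Delay, Commit2, Delay2, Commit3). -/
def isCommitLab : RLabel → Prop
  | RLabel.commit _ _ => True
  | RLabel.commitN => True
  | _ => False

/-- Rollback labels (rules Rollback, Roll1-3, Undo-*, Resume1-4). -/
def isRollLab : RLabel → Prop
  | RLabel.rollback _ _ => True
  | RLabel.rollN => True
  | _ => False

/-- A step using only the rollback rules of Figure 9. -/
def RollStep (State Value : Type) (L : Lang State Value)
    (S S' : RSys State Value) : Prop :=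
  ∃ l, isRollLab l ∧ RStepL State Value L l S S'

/-- No ongoing rollback: every process of the system is in normal forward mode. -/
def noOngoing (State Value : Type) (S : RSys State Value) : Prop :=
  ∀ Δ p s a, RComp.proc Δ p s a ∈ S → a = RAnn.noAnn

/-! ## Reversible semantics (uncontrolled and controlled backward) -/

/-- History items of the reversible semantics: every item records the
full state before the step. -/
inductive RvItem (State Value : Type) : Type where
  | seq (s : State)
  | send (s : State) (q ℓ : ℕ)
  | recM (s : State) (q ℓ : ℕ) (v : Value)
  | spawn (s : State) (q : ℕ)
  | check (τ : ℕ) (s : State)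

/-- Components of the reversible semantics: ⟪h,p,s⟫_φ (a plain configuration
⟨h,p,s⟩ is one with φ = ∅, realizing the structural equivalence SC) and
tagged messages (p,p',{ℓ,v}). -/
inductive RvComp (State Value : Type) : Type where
  | proc (h : List (RvItem State Value)) (p : ℕ) (s : State) (φ : Finset Req)
  | msg (p q ℓ : ℕ) (v : Value)

abbrev RvSys (State Value : Type) := Multiset (RvComp State Value)

def pidUsedRv (State Value : Type) (x : ℕ) (S : RvSys State Value) : Prop :=
  ∃ c ∈ S, match c with
    | RvComp.proc h p _ _ =>
        x = p ∨ ∃ it ∈ h, (match it with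
          | RvItem.send _ q _ => x = q
          | RvItem.recM _ q _ _ => x = q
          | RvItem.spawn _ q => x = q
          | _ => False)
    | RvComp.msg p q _ _ => x = p ∨ x = q

def tagUsedRv (State Value : Type) (ℓ : ℕ) (S : RvSys State Value) : Prop :=
  ∃ c ∈ S, match c with
    | RvComp.proc h _ _ φ =>
        (∃ it ∈ h, (match it with
          | RvItem.send _ _ ℓ' => ℓ = ℓ'
          | RvItem.recM _ _ ℓ' _ => ℓ = ℓ'
          | _ => False)) ∨ Req.tag ℓ ∈ φ
    | RvComp.msg _ _ ℓ' _ => ℓ = ℓ'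

def chkUsedRv (State Value : Type) (τ : ℕ) (S : RvSys State Value) : Prop :=
  ∃ c ∈ S, match c with
    | RvComp.proc h _ _ φ =>
        (∃ it ∈ h, (match it with
          | RvItem.check τ' _ => τ = τ'
          | _ => False)) ∨ Req.chk τ ∈ φ
    | RvComp.msg _ _ _ _ => False

/-- Forward rules of the uncontrolled reversible semantics (Figure 11). -/
inductive FwdStep (State Value : Type) (L : Lang State Value) :
    RvSys State Value → RvSys State Value → Prop where
  | seq : ∀ (h : List (RvItem State Value)) (p : ℕ) (s s' : State) (R : RvSys State Value),
      L.seqStep s s' →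
      FwdStep State Value L
        (RvComp.proc h p s ∅ ::ₘ R)
        (RvComp.proc (RvItem.seq s :: h) p s' ∅ ::ₘ R)
  | send : ∀ (h : List (RvItem State Value)) (p q ℓ : ℕ) (v : Value) (s s' : State)
      (R : RvSys State Value),
      L.sendStep s q v s' →
      ¬ tagUsedRv State Value ℓ (RvComp.proc h p s ∅ ::ₘ R) →
      FwdStep State Value L
        (RvComp.proc h p s ∅ ::ₘ R)
        (RvComp.msg p q ℓ v ::ₘ RvComp.proc (RvItem.send s q ℓ :: h) p s' ∅ ::ₘ R)
  | recv : ∀ (h : List (RvItem State Value)) (p q ℓ : ℕ) (v : Value) (s s' : State)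
      (R : RvSys State Value),
      L.recvStep s v s' →
      FwdStep State Value L
        (RvComp.msg q p ℓ v ::ₘ RvComp.proc h p s ∅ ::ₘ R)
        (RvComp.proc (RvItem.recM s q ℓ v :: h) p s' ∅ ::ₘ R)
  | spawn : ∀ (h : List (RvItem State Value)) (p q : ℕ) (s s0 s' : State)
      (R : RvSys State Value),
      L.spawnStep s q s0 s' →
      ¬ pidUsedRv State Value q (RvComp.proc h p s ∅ ::ₘ R) →
      FwdStep State Value L
        (RvComp.proc h p s ∅ ::ₘ R)
        (RvComp.proc (RvItem.spawn s q :: h) p s' ∅ ::ₘ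
          RvComp.proc [] q s0 ∅ ::ₘ R)
  | check : ∀ (h : List (RvItem State Value)) (p τ : ℕ) (s s' : State)
      (R : RvSys State Value),
      L.checkStep s τ s' →
      ¬ chkUsedRv State Value τ (RvComp.proc h p s ∅ ::ₘ R) →
      FwdStep State Value L
        (RvComp.proc h p s ∅ ::ₘ R)
        (RvComp.proc (RvItem.check τ s :: h) p s' ∅ ::ₘ R)

/-- Backward rules of the uncontrolled reversible semantics (Figure 12). -/
inductive BwdStep (State Value : Type) :
    RvSys State Value → RvSys State Value → Prop where
  | seq : ∀ (h : List (RvItem State Value)) (p : ℕ) (s s' : State) (R : RvSys State Value),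
      BwdStep State Value
        (RvComp.proc (RvItem.seq s :: h) p s' ∅ ::ₘ R)
        (RvComp.proc h p s ∅ ::ₘ R)
  | send : ∀ (h : List (RvItem State Value)) (p q ℓ : ℕ) (v : Value) (s s' : State)
      (R : RvSys State Value),
      BwdStep State Value
        (RvComp.msg p q ℓ v ::ₘ RvComp.proc (RvItem.send s q ℓ :: h) p s' ∅ ::ₘ R)
        (RvComp.proc h p s ∅ ::ₘ R)
  | recv : ∀ (h : List (RvItem State Value)) (p q ℓ : ℕ) (v : Value) (s s' : State)
      (R : RvSys State Value),
      BwdStep State Value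
        (RvComp.proc (RvItem.recM s q ℓ v :: h) p s' ∅ ::ₘ R)
        (RvComp.msg q p ℓ v ::ₘ RvComp.proc h p s ∅ ::ₘ R)
  | spawn : ∀ (h : List (RvItem State Value)) (p q : ℕ) (s s' s0 : State)
      (R : RvSys State Value),
      BwdStep State Value
        (RvComp.proc (RvItem.spawn s q :: h) p s' ∅ ::ₘ RvComp.proc [] q s0 ∅ ::ₘ R)
        (RvComp.proc h p s ∅ ::ₘ R)
  | check : ∀ (h : List (RvItem State Value)) (p τ : ℕ) (s s' : State)
      (R : RvSys State Value),
      BwdStep State Value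
        (RvComp.proc (RvItem.check τ s :: h) p s' ∅ ::ₘ R)
        (RvComp.proc h p s ∅ ::ₘ R)

/-- The uncontrolled reversible semantics ⇌ = ⇀ ∪ ↽. -/
def RevStep (State Value : Type) (L : Lang State Value)
    (S S' : RvSys State Value) : Prop :=
  FwdStep State Value L S S' ∨ BwdStep State Value S S'

/-- Initial/reachable systems of the reversible semantics. -/
def ReachableRv (State Value : Type) (L : Lang State Value) (S : RvSys State Value) : Prop :=
  ∃ p s, Relation.ReflTransGen (RevStep State Value L)
    ({RvComp.proc ([] : List (RvItem State Value)) p s ∅} : RvSys State Value) S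

/-- The controlled backward semantics ⟲ (Figure 15).  A configuration is in
rollback mode iff its request set φ is nonempty (structural equivalence SC);
the determinizing convention is encoded in the side conditions of
spawn2 (Spawn1 not applicable) and send2 (Send1 not applicable). -/
inductive CBStep (State Value : Type) (L : Lang State Value) :
    RvSys State Value → RvSys State Value → Prop where
  | seq : ∀ (h : List (RvItem State Value)) (p : ℕ) (s s' : State) (φ : Finset Req)
      (R : RvSys State Value),
      φ ≠ ∅ →
      CBStep State Value L
        (RvComp.proc (RvItem.seq s' :: h) p s φ ::ₘ R)
        (RvComp.proc h p s' φ ::ₘ R)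
  | check : ∀ (h : List (RvItem State Value)) (p τ : ℕ) (s s' : State) (φ : Finset Req)
      (R : RvSys State Value),
      φ ≠ ∅ →
      CBStep State Value L
        (RvComp.proc (RvItem.check τ s' :: h) p s φ ::ₘ R)
        (RvComp.proc h p s' (φ.erase (Req.chk τ)) ::ₘ R)
  | sp : ∀ (p : ℕ) (s : State) (φ : Finset Req) (R : RvSys State Value),
      Req.sp ∈ φ →
      CBStep State Value L
        (RvComp.proc [] p s φ ::ₘ R)
        (RvComp.proc [] p s (φ.erase Req.sp) ::ₘ R)
  | recv : ∀ (h : List (RvItem State Value)) (p q ℓ : ℕ) (v : Value) (s s' : State)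
      (φ : Finset Req) (R : RvSys State Value),
      φ ≠ ∅ →
      CBStep State Value L
        (RvComp.proc (RvItem.recM s' q ℓ v :: h) p s φ ::ₘ R)
        (RvComp.msg q p ℓ v ::ₘ RvComp.proc h p s' (φ.erase (Req.tag ℓ)) ::ₘ R)
  | spawn1 : ∀ (h : List (RvItem State Value)) (p q : ℕ) (s s'' s' : State)
      (φ : Finset Req) (R : RvSys State Value),
      φ ≠ ∅ →
      CBStep State Value L
        (RvComp.proc (RvItem.spawn s'' q :: h) p s φ ::ₘ RvComp.proc [] q s' ∅ ::ₘ R)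
        (RvComp.proc h p s'' φ ::ₘ R)
  | spawn2 : ∀ (h h' : List (RvItem State Value)) (p q τ : ℕ) (s s'' s' : State)
      (φ φ' : Finset Req) (R : RvSys State Value),
      φ ≠ ∅ →
      ¬ (h' = [] ∧ φ' = ∅) →
      CBStep State Value L
        (RvComp.proc (RvItem.spawn s'' q :: h) p s φ ::ₘ RvComp.proc h' q s' φ' ::ₘ R)
        (RvComp.proc (RvItem.spawn s'' q :: h) p s φ ::ₘ
          RvComp.proc h' q s' (insert (Req.chk τ) (insert Req.sp φ')) ::ₘ R)
  | send1 : ∀ (h : List (RvItem State Value)) (p q ℓ : ℕ) (v : Value) (s s'' : State)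
      (φ : Finset Req) (R : RvSys State Value),
      φ ≠ ∅ →
      CBStep State Value L
        (RvComp.proc (RvItem.send s'' q ℓ :: h) p s φ ::ₘ RvComp.msg p q ℓ v ::ₘ R)
        (RvComp.proc h p s'' φ ::ₘ R)
  | send2 : ∀ (h h' : List (RvItem State Value)) (p q ℓ τ : ℕ) (s s'' s' : State)
      (φ φ' : Finset Req) (R : RvSys State Value),
      φ ≠ ∅ →
      (∀ v, RvComp.msg p q ℓ v ∉ R) →
      CBStep State Value L
        (RvComp.proc (RvItem.send s'' q ℓ :: h) p s φ ::ₘ RvComp.proc h' q s' φ' ::ₘ R)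
        (RvComp.proc (RvItem.send s'' q ℓ :: h) p s φ ::ₘ
          RvComp.proc h' q s' (insert (Req.chk τ) (insert (Req.tag ℓ) φ')) ::ₘ R)

/-- rolldel: remove all ongoing rollback annotations. -/
def rolldelComp (State Value : Type) : RvComp State Value → RvComp State Value
  | RvComp.proc h p s _ => RvComp.proc h p s ∅
  | RvComp.msg p q ℓ v => RvComp.msg p q ℓ v

def rolldel (State Value : Type) (S : RvSys State Value) : RvSys State Value :=
  S.map (rolldelComp State Value)

/-! ## The equivalence ≈ between the two semantics -/

/-- Normalized history items, common target of ⌊·⌋ and ⌈·⌉. -/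
inductive NItem (State Value : Type) : Type where
  | send (q ℓ : ℕ)
  | recM (q ℓ : ℕ) (v : Value)
  | spawn (q : ℕ)
  | check (τ : ℕ) (s : Option State)

/-- Normalized components. -/
inductive NComp (State Value : Type) : Type where
  | proc (h : List (NItem State Value)) (p : ℕ) (s : Option State)
  | msg (p q ℓ : ℕ) (v : Value)

/-- History normalization of ⌊·⌋: drop delayed checkpoints and the
checkpoint sets of rec items. -/
def normHist (State Value : Type) : Hist State Value → List (NItem State Value)
  | [] => []
  | HItem.check τ s :: Δ => NItem.check τ s :: normHist State Value Δ
  | HItem.dcheck _ _ :: Δ => normHist State Value Δ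
  | HItem.send q ℓ :: Δ => NItem.send q ℓ :: normHist State Value Δ
  | HItem.recM _ q ℓ v :: Δ => NItem.recM q ℓ v :: normHist State Value Δ
  | HItem.spawn q :: Δ => NItem.spawn q :: normHist State Value Δ

/-- ⌊·⌋: erase system notifications, checkpoint sets of messages,
rollback annotations, and normalize histories. -/
def floorComp (State Value : Type) : RComp State Value → Option (NComp State Value)
  | RComp.proc Δ p s _ => some (NComp.proc (normHist State Value Δ) p s)
  | RComp.msg _ p q ℓ v => some (NComp.msg p q ℓ v)
  | RComp.notif _ _ _ => none

def floorSys (State Value : Type) (S : RSys State Value) : Multiset (NComp State Value) :=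
  Multiset.filterMap (floorComp State Value) S

/-- History normalization of ⌈·⌉: drop seq items and the saved states of
send, rec and spawn items. -/
def normRvHist (State Value : Type) : List (RvItem State Value) → List (NItem State Value)
  | [] => []
  | RvItem.seq _ :: h => normRvHist State Value h
  | RvItem.send _ q ℓ :: h => NItem.send q ℓ :: normRvHist State Value h
  | RvItem.recM _ q ℓ v :: h => NItem.recM q ℓ v :: normRvHist State Value h
  | RvItem.spawn _ q :: h => NItem.spawn q :: normRvHist State Value h
  | RvItem.check τ s :: h => NItem.check τ (some s) :: normRvHist State Value h

/-- ⌈·⌉. -/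
def ceilComp (State Value : Type) : RvComp State Value → NComp State Value
  | RvComp.proc h p s _ => NComp.proc (normRvHist State Value h) p (some s)
  | RvComp.msg p q ℓ v => NComp.msg p q ℓ v

def ceilSys (State Value : Type) (S : RvSys State Value) : Multiset (NComp State Value) :=
  S.map (ceilComp State Value)

/-- The equivalence ≈ : S_rr ≈ S_r iff ⌊S_rr⌋ = ⌈S_r⌉. -/
def equivSys (State Value : Type) (S : RSys State Value) (T : RvSys State Value) : Prop :=
  floorSys State Value S = ceilSys State Value T

end RB

namespace RB

/-! `rolldel` forgets every request set, so the rules of `⟲` that only edit request sets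
(SP, Spawn2, Send2) become the identity, while each other rule becomes the `↽` rule undoing the
same history item. -/

section

variable {State Value : Type}

@[simp]
theorem rolldel_cons (c : RvComp State Value) (S : RvSys State Value) :
    rolldel State Value (c ::ₘ S) = rolldelComp State Value c ::ₘ rolldel State Value S :=
  Multiset.map_cons _ _ _

theorem CBStep.rolldel_reflGen {L : Lang State Value} {S S' : RvSys State Value}
    (h : CBStep State Value L S S') :
    Relation.ReflGen (BwdStep State Value) (rolldel State Value S) (rolldel State Value S') := by
  cases h with
  | seq h p s s' _ R =>
    exact .single (by simpa [rolldelComp] using BwdStep.seq h p s' s (rolldel State Value R))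
  | check h p τ s s' _ R =>
    exact .single (by simpa [rolldelComp] using BwdStep.check h p τ s' s (rolldel State Value R))
  | recv h p q ℓ v s s' _ R =>
    exact .single <| by
      simpa [rolldelComp] using BwdStep.recv h p q ℓ v s' s (rolldel State Value R)
  | spawn1 h p q s s'' s' _ R =>
    exact .single <| by
      simpa [rolldelComp] using BwdStep.spawn h p q s'' s s' (rolldel State Value R)
  | send1 h p q ℓ v s s'' _ R =>
    refine .single ?_
    simp only [rolldel_cons, rolldelComp]
    rw [Multiset.cons_swap]
    exact BwdStep.send h p q ℓ v s'' s (rolldel State Value R)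
  | sp | spawn2 | send2 =>
    simp only [rolldel_cons, rolldelComp]
    exact .refl

theorem CBStep.rolldel_reflTransGen {L : Lang State Value} {S S' : RvSys State Value}
    (h : Relation.ReflTransGen (CBStep State Value L) S S') :
    Relation.ReflTransGen (BwdStep State Value) (rolldel State Value S) (rolldel State Value S') :=
  Relation.ReflTransGen.lift' _ (fun _ _ hstep => hstep.rolldel_reflGen.to_reflTransGen) _ _ h

end

theorem rolldel_sound_general
    (State Value : Type) (L : Lang State Value) (S S' : RvSys State Value)
    (hcb : Relation.ReflTransGen (CBStep State Value L) S S') :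
    Relation.ReflTransGen (RevStep State Value L)
      (rolldel State Value S) (rolldel State Value S') :=
  Relation.ReflTransGen.mono (fun _ _ => Or.inr) _ _ (CBStep.rolldel_reflTransGen hcb)

/-- **Theorem (soundness of the controlled backward semantics).**
Let `S` be a reachable system under the uncontrolled reversible semantics
(a system possibly carrying rollback-request annotations whose underlying
plain system `rolldel S` is derivable from an initial single-process
system with empty history).  If `S ⟲* S'` under the controlled backward
semantics, then `rolldel S ⇌* rolldel S'` under the uncontrolled
reversible semantics. -/
theorem rolldel_sound
    (State Value : Type) (L : Lang State Value) (S S' : RvSys State Value)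
    (hreach : ReachableRv State Value L (rolldel State Value S))
    (hcb : Relation.ReflTransGen (CBStep State Value L) S S') :
    Relation.ReflTransGen (RevStep State Value L)
      (rolldel State Value S) (rolldel State Value S') :=
  rolldel_sound_general State Value L S S' hcb

end RB
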